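/- Let A be a commutative ring equipped with a derivation d : A → A, let s ∈ ℕ, let b_0,…,b_s : ℤ → A be coefficient sequences, and let B denote the operator B(w)(n) = ∑_{i=0}^s b_i(n) w(n+i) on sequences ℤ → A. Suppose γ : ℤ → A satisfies d(γ(n)) = B(γ)(n) for all n ∈ ℤ. Then for every sequence u : ℤ → A and every n ∈ ℤ, d(u(n)·γ(n)) = (B*(u)(n) + d(u(n)))·γ(n) + P_B(u,γ)(n+1) − P_B(u,γ)(n). -/

import Mathlib

/-- Differential reduction via Lagrange's identity: if `d` is a derivation on a commutative
ring `A` and `γ : ℤ → A` satisfies `d(γ(n)) = B(γ)(n)` for a recurrence operator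
`B(w)(n) = ∑_{i=0}^s b_i(n) w(n+i)`, then for every sequence `u` and every `n`,
`d(u(n)·γ(n)) = (B*(u)(n) + d(u(n)))·γ(n) + P_B(u,γ)(n+1) − P_B(u,γ)(n)`. -/
theorem derivation_reduction (A : Type*) [CommRing A] (d : A → A)
    (hd_add : ∀ x y : A, d (x + y) = d x + d y)
    (hd_mul : ∀ x y : A, d (x * y) = x * d y + d x * y)
    (s : ℕ) (b : ℕ → ℤ → A) (γ : ℤ → A)
    (hγ : ∀ n : ℤ, d (γ n) = ∑ i ∈ Finset.range (s + 1), b i n * γ (n + i))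
    (u : ℤ → A) (n : ℤ) :
    d (u n * γ n) =
      ((∑ i ∈ Finset.range (s + 1), b i (n - i) * u (n - i)) + d (u n)) * γ n +
      ((∑ i ∈ Finset.range s,
          (∑ j ∈ Finset.Icc (i + 1) s, b j ((n + 1) + i - j) * u ((n + 1) + i - j)) *
            γ ((n + 1) + i)) -
       (∑ i ∈ Finset.range s,
          (∑ j ∈ Finset.Icc (i + 1) s, b j (n + i - j) * u (n + i - j)) * γ (n + i))) := by
  set h : ℕ → A := fun i => (∑ j ∈ Finset.Icc i s, b j (n + (i:ℤ) - j) * u (n + (i:ℤ) - j)) * γ (n + (i:ℤ)) with hh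
  set k : ℕ → A := fun i => (∑ j ∈ Finset.Icc (i+1) s, b j (n + (i:ℤ) - j) * u (n + (i:ℤ) - j)) * γ (n + (i:ℤ)) with hk
  have eP1 : (∑ i ∈ Finset.range s,
          (∑ j ∈ Finset.Icc (i + 1) s, b j ((n + 1) + i - j) * u ((n + 1) + i - j)) *
            γ ((n + 1) + i)) = ∑ i ∈ Finset.range (s+1), h i - h 0 := by
    rw [Finset.sum_range_succ' h]
    have e : ∀ i ∈ Finset.range s,
        (∑ j ∈ Finset.Icc (i + 1) s, b j ((n + 1) + i - j) * u ((n + 1) + i - j)) *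
            γ ((n + 1) + i) = h (i+1) := by
      intro i _
      simp only [hh]
      have e1 : ((n:ℤ) + 1) + (i:ℕ) = n + ((i+1 : ℕ) : ℤ) := by push_cast; ring
      rw [e1]
    rw [Finset.sum_congr rfl e]
    ring
  have eP0 : (∑ i ∈ Finset.range s,
          (∑ j ∈ Finset.Icc (i + 1) s, b j (n + i - j) * u (n + i - j)) * γ (n + i))
      = ∑ i ∈ Finset.range (s+1), k i := by
    rw [Finset.sum_range_succ]
    have : k s = 0 := by
      simp only [hk]
      rw [Finset.Icc_eq_empty (by omega)]
      simp
    rw [this, add_zero]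
  have ehk : ∀ i ∈ Finset.range (s+1), h i - k i = b i n * u n * γ (n + i) := by
    intro i hi
    have his : i ≤ s := Nat.lt_succ_iff.mp (Finset.mem_range.mp hi)
    simp only [hh, hk]
    have hins : Finset.Icc i s = insert i (Finset.Icc (i+1) s) := by
      rw [Finset.Icc_add_one_left_eq_Ioc, ← Finset.Icc_erase_left, Finset.insert_erase (by simp [his])]
    rw [hins, Finset.sum_insert (by simp)]
    rw [show (n : ℤ) + i - i = n from by ring]
    ring
  have eh0 : h 0 = (∑ i ∈ Finset.range (s + 1), b i (n - i) * u (n - i)) * γ n := by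
    simp only [hh, Nat.cast_zero, add_zero]
    congr 1
    rw [← Nat.Ico_zero_eq_range, Finset.Ico_add_one_right_eq_Icc]
  have key : (∑ i ∈ Finset.range (s+1), h i) - (∑ i ∈ Finset.range (s+1), k i)
      = ∑ i ∈ Finset.range (s+1), b i n * u n * γ (n + i) := by
    rw [← Finset.sum_sub_distrib]
    exact Finset.sum_congr rfl ehk
  have e2 : (∑ i ∈ Finset.range (s+1), h i - h 0 - ∑ i ∈ Finset.range (s+1), k i)
      = ∑ i ∈ Finset.range (s+1), b i n * u n * γ (n + i) - h 0 := by
    rw [← key]; ring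
  rw [hd_mul, hγ n, eP1, eP0, e2, eh0, Finset.mul_sum]
  rw [Finset.sum_congr rfl (fun i _ => by ring :
    ∀ i ∈ Finset.range (s+1), u n * (b i n * γ (n + i)) = b i n * u n * γ (n + i))]
  ring
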